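/- Fix 0 < q < 1, 0 < α < q^θ with θ > 0 and A = log_q α, and parametrize the contour C_{A,π/4} by W(s) = log_q(α + s e^{iπ/4}) for s ≥ 0. Then with g_0 as above, for all s > 0, d/ds Re[g_0(W(s))] > Σ_{k=0}^∞ q^{2k} s^2 ( q^k s^2 cos(π/4) - (1-2α q^k) s cos(π/2) - α(1-α q^k) cos(3π/4) ) / ((1-α q^k)^2 |α + s e^{iπ/4}|^2 |1-(α+s e^{iπ/4})q^k|^2 ) > 0; in particular s ↦ Re[g_0(W(s))] is strictly increasing on (0,∞). -/

import Mathlib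

open Complex Real

/-- The infinite q-Pochhammer symbol `(a; q)_∞ = ∏_{k=0}^∞ (1 - a q^k)`. -/
noncomputable def qPoch (a q : ℂ) : ℂ := ∏' k : ℕ, (1 - a * q ^ k)

/-- The q-Gamma function `Γ_q(z) = (1-q)^{1-z} (q;q)_∞ / (q^z;q)_∞`. -/
noncomputable def qGamma (q : ℝ) (z : ℂ) : ℂ :=
  ((1 - q : ℂ)) ^ ((1 : ℂ) - z) * qPoch (q : ℂ) (q : ℂ) / qPoch ((q : ℂ) ^ z) (q : ℂ)

/-- The q-digamma function `Ψ_q(z) = d/dz log Γ_q(z)`. -/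
noncomputable def qDigamma (q : ℝ) (z : ℂ) : ℂ :=
  deriv (fun w => Complex.log (qGamma q w)) z

/-- `κ(q,θ) = Ψ'_q(θ) / ((log q)^2 q^θ)`. -/
noncomputable def kappaC (q θ : ℝ) : ℂ :=
  deriv (qDigamma q) (θ : ℂ) / (((Real.log q : ℂ)) ^ 2 * (q : ℂ) ^ (θ : ℂ))

/-- `f(q,θ) = Ψ'_q(θ)/(log q)^2 - Ψ_q(θ)/log q - log(1-q)/log q`. -/
noncomputable def fC (q θ : ℝ) : ℂ :=
  deriv (qDigamma q) (θ : ℂ) / ((Real.log q : ℂ)) ^ 2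
    - qDigamma q (θ : ℂ) / (Real.log q : ℂ)
    - (Real.log (1 - q) : ℂ) / (Real.log q : ℂ)

/-- `f₀(Z) = -f (log q) Z + κ q^Z + log((q^Z; q)_∞)`. -/
noncomputable def f0 (q θ : ℝ) (Z : ℂ) : ℂ :=
  -fC q θ * (Real.log q : ℂ) * Z + kappaC q θ * (q : ℂ) ^ Z
    + Complex.log (qPoch ((q : ℂ) ^ Z) (q : ℂ))

/-- `A = log_q α`. -/
noncomputable def Aq (q α : ℝ) : ℝ := Real.log α / Real.log q

/-- `g(q,θ) = (Ψ'_q(θ)/(log q)^2)(α/q^θ) - Ψ_q(A)/log q - log(1-q)/log q`. -/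
noncomputable def gC (q θ α : ℝ) : ℂ :=
  deriv (qDigamma q) (θ : ℂ) / ((Real.log q : ℂ)) ^ 2 * ((α : ℂ) / (q : ℂ) ^ (θ : ℂ))
    - qDigamma q ((Aq q α : ℝ) : ℂ) / (Real.log q : ℂ)
    - (Real.log (1 - q) : ℂ) / (Real.log q : ℂ)

/-- `g₀(Z) = -g (log q) Z + κ q^Z + log((q^Z; q)_∞)`. -/
noncomputable def g0 (q θ α : ℝ) (Z : ℂ) : ℂ :=
  -gC q θ α * (Real.log q : ℂ) * Z + kappaC q θ * (q : ℂ) ^ Z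
    + Complex.log (qPoch ((q : ℂ) ^ Z) (q : ℂ))

/-- The contour `C_{A,π/4}` parametrized by `W(s) = log_q(α + s e^{iπ/4})` for `s ≥ 0`. -/
noncomputable def WcA (q α : ℝ) (s : ℝ) : ℂ :=
  Complex.log ((α : ℂ) + (s : ℂ) * Complex.exp (Complex.I * (Real.pi / 4))) / (Real.log q : ℂ)

/-!
On the contour, `q ^ W(s) = w := α + s ζ` with `ζ = e^{iπ/4}`, so `Re g₀(W(s))` is the real part of
`-g log w + κ w + ∑ₖ log (1 - w qᵏ)`. The product formula for `Γ_q` gives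
`κ = ∑ₖ qᵏ / (1 - q^θ qᵏ)²` and `g = α κ - ∑ₖ α qᵏ / (1 - α qᵏ)`, so the `s`-derivative is
`∑ₖ Re (ζ cₖ)` with `cₖ = κₖ (1 - α / w) + α qᵏ / ((1 - α qᵏ) w) - qᵏ / (1 - w qᵏ)`.
Replacing `κₖ` by `qᵏ / (1 - α qᵏ)²` collapses `cₖ` to `-q²ᵏ (w - α)² / ((1 - α qᵏ)² w (1 - w qᵏ))`,
and `Re (ζ ·)` of that is the `k`-th term of the lower bound, which is positive. As `α < q^θ`, this
replacement lowers `κₖ`, and it lowers the `k`-th term because `Re (ζ (1 - α / w)) > 0`.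
-/

open Filter Topology Metric ComplexConjugate

section QPochhammer

variable {q : ℝ}

lemma one_sub_norm_le_norm_one_sub_mul (y : ℂ) {t : ℝ} (ht0 : 0 ≤ t) (ht1 : t ≤ 1) :
    1 - ‖y‖ ≤ ‖1 - y * t‖ :=
  calc 1 - ‖y‖ ≤ 1 - ‖y * t‖ := by
        rw [norm_mul, Complex.norm_of_nonneg ht0]; nlinarith [norm_nonneg y]
    _ ≤ ‖1 - y * t‖ := by simpa using norm_sub_norm_le (1 : ℂ) (y * t)

lemma abs_im_div_le_norm_one_sub_mul (y : ℂ) {t : ℝ} (ht : 0 ≤ t) :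
    |y.im| / (2 * ‖y‖) ≤ ‖1 - y * t‖ := by
  rcases eq_or_ne y 0 with rfl | hy
  · simp
  have hy' : 0 < ‖y‖ := norm_pos_iff.mpr hy
  by_cases hsmall : 2 * (t * ‖y‖) ≤ 1
  · calc |y.im| / (2 * ‖y‖) ≤ 1 / 2 := by
          rw [div_le_iff₀ (by positivity)]; linarith [abs_im_le_norm y]
      _ ≤ 1 - ‖y * t‖ := by rw [norm_mul, Complex.norm_of_nonneg ht]; linarith
      _ ≤ ‖1 - y * t‖ := by simpa using norm_sub_norm_le (1 : ℂ) (y * t)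
  · calc |y.im| / (2 * ‖y‖) ≤ t * |y.im| := by
          rw [div_le_iff₀ (by positivity)]; nlinarith [abs_nonneg y.im]
      _ = |(1 - y * t).im| := by simp [abs_mul, abs_of_nonneg ht, mul_comm]
      _ ≤ ‖1 - y * t‖ := abs_im_le_norm _

lemma norm_pow_div_one_sub_mul_pow_le (hq : 0 ≤ q) {u : ℂ} {δ : ℝ} (hδ : 0 < δ) {k : ℕ}
    (h : δ ≤ ‖1 - u * q ^ k‖) (n : ℕ) :
    ‖(q : ℂ) ^ k / (1 - u * q ^ k) ^ n‖ ≤ q ^ k / δ ^ n := by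
  rw [norm_div, norm_pow, norm_pow, Complex.norm_of_nonneg hq]
  exact div_le_div_of_nonneg_left (by positivity) (by positivity) (pow_le_pow_left₀ hδ.le h n)

lemma summable_pow_div_one_sub_mul_pow (hq0 : 0 ≤ q) (hq1 : q < 1) {u : ℂ} {δ : ℝ} (hδ : 0 < δ)
    (h : ∀ k : ℕ, δ ≤ ‖1 - u * q ^ k‖) (n : ℕ) :
    Summable fun k : ℕ => (q : ℂ) ^ k / (1 - u * q ^ k) ^ n :=
  .of_norm_bounded ((summable_geometric_of_lt_one hq0 hq1).div_const _)
    fun k => norm_pow_div_one_sub_mul_pow_le hq0 hδ (h k) n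

lemma one_sub_norm_le_norm_one_sub_mul_pow (hq0 : 0 ≤ q) (hq1 : q ≤ 1) (y : ℂ) (k : ℕ) :
    1 - ‖y‖ ≤ ‖1 - y * q ^ k‖ := by
  simpa using one_sub_norm_le_norm_one_sub_mul y (pow_nonneg hq0 k) (pow_le_one₀ hq0 hq1)

lemma one_sub_mul_pow_mem_slitPlane (hq0 : 0 ≤ q) (hq1 : q ≤ 1) {y : ℂ} (hy : ‖y‖ < 1)
    (k : ℕ) : 1 - y * q ^ k ∈ slitPlane := by
  have hre : (y * (q : ℂ) ^ k).re ≤ ‖y‖ := by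
    refine (re_le_norm _).trans ?_
    rw [norm_mul, norm_pow, Complex.norm_of_nonneg hq0]
    exact mul_le_of_le_one_right (norm_nonneg y) (pow_le_one₀ hq0 hq1)
  exact Or.inl (by rw [sub_re, one_re]; linarith)

lemma one_sub_mul_pow_mem_slitPlane_of_im_pos (hq : 0 < q) {y : ℂ} (hy : 0 < y.im) (k : ℕ) :
    1 - y * q ^ k ∈ slitPlane := by
  have him : (1 - y * (q : ℂ) ^ k).im = -(y.im * q ^ k) := by
    rw [← ofReal_pow, sub_im, one_im, mul_im, ofReal_re, ofReal_im]; ring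
  exact Or.inr (by rw [him]; nlinarith [pow_pos hq k])

lemma one_sub_mul_pow_pos (hq0 : 0 ≤ q) (hq1 : q ≤ 1) {t : ℝ} (ht0 : 0 ≤ t) (ht1 : t < 1)
    (k : ℕ) : 0 < 1 - t * q ^ k := by
  linarith [mul_le_of_le_one_right ht0 (pow_le_one₀ hq0 hq1 (n := k))]

lemma summable_log_one_sub_mul_pow (hq0 : 0 ≤ q) (hq1 : q < 1) (u : ℂ) :
    Summable fun k : ℕ => log (1 - u * q ^ k) := by
  have hgeom : Summable fun k : ℕ => -(u * (q : ℂ) ^ k) :=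
    ((summable_geometric_of_norm_lt_one (by
      rwa [Complex.norm_of_nonneg hq0])).mul_left u).neg
  simpa [sub_eq_add_neg] using Complex.summable_log_one_add_of_summable hgeom

noncomputable def qLogPoch (q : ℝ) (u : ℂ) : ℂ := ∑' k : ℕ, log (1 - u * q ^ k)

noncomputable def qLogPochDeriv (q : ℝ) (u : ℂ) : ℂ := ∑' k : ℕ, -(q ^ k / (1 - u * q ^ k))

noncomputable def qLambert (q : ℝ) (u : ℂ) : ℂ := ∑' k : ℕ, u * q ^ k / (1 - u * q ^ k)

noncomputable def qLambertDeriv (q : ℝ) (u : ℂ) : ℂ := ∑' k : ℕ, q ^ k / (1 - u * q ^ k) ^ 2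

lemma qPoch_eq_exp_qLogPoch (hq0 : 0 ≤ q) (hq1 : q < 1) {u : ℂ}
    (hu : ∀ k : ℕ, 1 - u * q ^ k ≠ 0) : qPoch u q = exp (qLogPoch q u) :=
  (cexp_tsum_eq_tprod hu (summable_log_one_sub_mul_pow hq0 hq1 u)).symm

lemma re_log_qPoch (hq0 : 0 ≤ q) (hq1 : q < 1) {u : ℂ} (hu : ∀ k : ℕ, 1 - u * q ^ k ≠ 0) :
    (log (qPoch u q)).re = (qLogPoch q u).re := by
  rw [qPoch_eq_exp_qLogPoch hq0 hq1 hu, log_re, norm_exp, Real.log_exp]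

lemma neg_mul_qLogPochDeriv (u : ℂ) : -(u * qLogPochDeriv q u) = qLambert q u := by
  rw [qLogPochDeriv, qLambert, ← tsum_mul_left, ← tsum_neg]
  congr 1; funext k; ring

lemma hasDerivAt_qLogPoch (hq0 : 0 < q) (hq1 : q < 1) {U : Set ℂ} (hU : IsOpen U)
    (hU' : IsPreconnected U) {δ : ℝ} (hδ : 0 < δ)
    (hslit : ∀ y ∈ U, ∀ k : ℕ, 1 - y * q ^ k ∈ slitPlane)
    (hlow : ∀ y ∈ U, ∀ k : ℕ, δ ≤ ‖1 - y * q ^ k‖) {u : ℂ} (hu : u ∈ U) :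
    HasDerivAt (qLogPoch q) (qLogPochDeriv q u) u := by
  refine hasDerivAt_tsum_of_isPreconnected (u := fun k => q ^ k / δ)
    (g := fun k (y : ℂ) => Complex.log (1 - y * q ^ k))
    (g' := fun k (y : ℂ) => -(q ^ k / (1 - y * q ^ k)))
    ((summable_geometric_of_lt_one hq0.le hq1).div_const δ) hU hU'
    (fun k y hy => ?_) (fun k y hy => ?_) hu (summable_log_one_sub_mul_pow hq0.le hq1 u) hu
  · simpa [neg_div] using (((hasDerivAt_id y).mul_const ((q : ℂ) ^ k)).const_sub 1).clog
      (hslit y hy k)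
  · simpa using norm_pow_div_one_sub_mul_pow_le hq0.le hδ (hlow y hy k) 1

lemma hasDerivAt_qLogPoch_of_norm_lt_one (hq0 : 0 < q) (hq1 : q < 1) {u : ℂ} (hu : ‖u‖ < 1) :
    HasDerivAt (qLogPoch q) (qLogPochDeriv q u) u := by
  obtain ⟨r, hur, hr1⟩ := exists_between hu
  refine hasDerivAt_qLogPoch hq0 hq1 (U := ball 0 r) isOpen_ball
    (convex_ball 0 r).isPreconnected (sub_pos.mpr hr1) (fun y hy k => ?_) (fun y hy k => ?_)
    (mem_ball_zero_iff.mpr hur)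
  all_goals rw [mem_ball_zero_iff] at hy
  · exact one_sub_mul_pow_mem_slitPlane hq0.le hq1.le (by linarith) k
  · linarith [one_sub_norm_le_norm_one_sub_mul_pow hq0.le hq1.le y k]

lemma hasDerivAt_qLogPoch_of_im_pos (hq0 : 0 < q) (hq1 : q < 1) {w : ℂ} (hw : 0 < w.im) :
    HasDerivAt (qLogPoch q) (qLogPochDeriv q w) w := by
  have hball : ∀ y ∈ ball w (w.im / 2), w.im / 2 < y.im ∧ ‖y‖ ≤ ‖w‖ + w.im / 2 := by
    intro y hy
    rw [mem_ball, dist_eq_norm] at hy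
    have him := abs_im_le_norm (y - w)
    rw [sub_im, abs_le] at him
    constructor
    · linarith
    · linarith [norm_sub_norm_le y w]
  refine hasDerivAt_qLogPoch hq0 hq1 (U := ball w (w.im / 2)) isOpen_ball
    (convex_ball w _).isPreconnected (δ := (w.im / 2) / (2 * (‖w‖ + w.im / 2))) (by positivity)
    (fun y hy k => ?_) (fun y hy k => ?_) (mem_ball_self (by positivity))
  · exact one_sub_mul_pow_mem_slitPlane_of_im_pos hq0 (by linarith [(hball y hy).1]) k
  · obtain ⟨him, hnorm⟩ := hball y hy
    have hyn : 0 < ‖y‖ := norm_pos_iff.mpr (fun h => by simp [h] at him; linarith)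
    refine le_trans ?_ (by simpa using abs_im_div_le_norm_one_sub_mul y (pow_nonneg hq0.le k))
    exact div_le_div₀ (abs_nonneg _) (by rw [abs_of_pos (by linarith)]; linarith) (by positivity)
      (by linarith)

lemma summable_pow_div_one_sub_mul_pow_of_im_pos (hq0 : 0 < q) (hq1 : q < 1) {w : ℂ}
    (hw : 0 < w.im) (n : ℕ) : Summable fun k : ℕ => (q : ℂ) ^ k / (1 - w * q ^ k) ^ n := by
  have hwn : 0 < ‖w‖ := norm_pos_iff.mpr (fun h => by simp [h] at hw)
  refine summable_pow_div_one_sub_mul_pow hq0.le hq1 (δ := |w.im| / (2 * ‖w‖)) (by positivity)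
    (fun k => ?_) n
  simpa using abs_im_div_le_norm_one_sub_mul w (pow_nonneg hq0.le k)

lemma hasDerivAt_qLambert (hq0 : 0 < q) (hq1 : q < 1) {u : ℂ} (hu : ‖u‖ < 1) :
    HasDerivAt (qLambert q) (qLambertDeriv q u) u := by
  obtain ⟨r, hur, hr1⟩ := exists_between hu
  have hr : 0 < 1 - r := sub_pos.mpr hr1
  have hlow : ∀ y ∈ ball (0 : ℂ) r, ∀ k : ℕ, 1 - r ≤ ‖1 - y * q ^ k‖ := fun y hy k => by
    rw [mem_ball_zero_iff] at hy
    linarith [one_sub_norm_le_norm_one_sub_mul_pow hq0.le hq1.le y k]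
  refine hasDerivAt_tsum_of_isPreconnected (u := fun k => q ^ k / (1 - r) ^ 2)
    (g := fun k (y : ℂ) => y * q ^ k / (1 - y * q ^ k))
    (g' := fun k (y : ℂ) => q ^ k / (1 - y * q ^ k) ^ 2)
    ((summable_geometric_of_lt_one hq0.le hq1).div_const _) isOpen_ball
    (convex_ball 0 r).isPreconnected (fun k y hy => ?_)
    (fun k y hy => norm_pow_div_one_sub_mul_pow_le hq0.le hr (hlow y hy k) 2)
    (mem_ball_self ((norm_nonneg u).trans_lt hur)) (by simp) (mem_ball_zero_iff.mpr hur)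
  have hne : 1 - y * (q : ℂ) ^ k ≠ 0 := fun h => by
    have := hlow y hy k; rw [h, norm_zero] at this; linarith
  have hlin : HasDerivAt (fun y : ℂ => y * q ^ k) (q ^ k) y := by
    simpa using (hasDerivAt_id y).mul_const ((q : ℂ) ^ k)
  refine (hlin.div (hlin.const_sub 1) hne).congr_deriv ?_
  rw [div_left_inj' (pow_ne_zero 2 hne)]
  ring

lemma qLogPoch_ofReal (hq0 : 0 ≤ q) (hq1 : q ≤ 1) {t : ℝ} (ht0 : 0 ≤ t) (ht1 : t < 1) :
    qLogPoch q t = ((∑' k : ℕ, Real.log (1 - t * q ^ k) : ℝ) : ℂ) := by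
  rw [qLogPoch, ofReal_tsum]
  congr 1; funext k
  rw [ofReal_log (one_sub_mul_pow_pos hq0 hq1 ht0 ht1 k).le]
  push_cast; rfl

lemma hasSum_qLambertDeriv_ofReal (hq0 : 0 < q) (hq1 : q < 1) {t : ℝ} (ht0 : 0 ≤ t) (ht1 : t < 1) :
    HasSum (fun k : ℕ => ((q ^ k / (1 - t * q ^ k) ^ 2 : ℝ) : ℂ)) (qLambertDeriv q t) := by
  have ht : ‖(t : ℂ)‖ < 1 := by rwa [Complex.norm_of_nonneg ht0]
  push_cast
  exact (summable_pow_div_one_sub_mul_pow hq0.le hq1 (sub_pos.mpr ht)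
    (one_sub_norm_le_norm_one_sub_mul_pow hq0.le hq1.le _) 2).hasSum

end QPochhammer

section QDigamma

variable {q : ℝ}

lemma norm_cpow_lt_one (hq0 : 0 < q) (hq1 : q < 1) {z : ℂ} (hz : 0 < z.re) :
    ‖(q : ℂ) ^ z‖ < 1 := by
  rw [norm_cpow_eq_rpow_re_of_pos hq0]
  exact Real.rpow_lt_one hq0.le hq1 hz

lemma one_sub_mul_pow_ne_zero (hq0 : 0 ≤ q) (hq1 : q ≤ 1) {u : ℂ} (hu : ‖u‖ < 1) (k : ℕ) :
    1 - u * q ^ k ≠ 0 :=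
  slitPlane_ne_zero (one_sub_mul_pow_mem_slitPlane hq0 hq1 hu k)

lemma hasDerivAt_ofReal_cpow (hq0 : 0 < q) (z : ℂ) :
    HasDerivAt (fun y : ℂ => (q : ℂ) ^ y) ((q : ℂ) ^ z * Real.log q) z := by
  rw [ofReal_log hq0.le]
  exact (hasStrictDerivAt_const_cpow (Or.inl (ofReal_ne_zero.mpr hq0.ne'))).hasDerivAt

noncomputable def qLogGamma (q : ℝ) (z : ℂ) : ℂ :=
  (1 - z) * Real.log (1 - q) + qLogPoch q q - qLogPoch q ((q : ℂ) ^ z)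

noncomputable def qDigammaSeries (q : ℝ) (z : ℂ) : ℂ :=
  -Real.log (1 - q) + Real.log q * qLambert q ((q : ℂ) ^ z)

lemma qGamma_eq_exp_qLogGamma (hq0 : 0 < q) (hq1 : q < 1) {z : ℂ} (hz : 0 < z.re) :
    qGamma q z = exp (qLogGamma q z) := by
  have hq : ‖(q : ℂ)‖ < 1 := by rwa [Complex.norm_of_nonneg hq0.le]
  have h1q : (1 - q : ℂ) = ((1 - q : ℝ) : ℂ) := by push_cast; ring
  rw [qGamma, qPoch_eq_exp_qLogPoch hq0.le hq1 (one_sub_mul_pow_ne_zero hq0.le hq1.le hq),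
    qPoch_eq_exp_qLogPoch hq0.le hq1
      (one_sub_mul_pow_ne_zero hq0.le hq1.le (norm_cpow_lt_one hq0 hq1 hz)),
    h1q, cpow_def_of_ne_zero (ofReal_ne_zero.mpr (by linarith)), ← ofReal_log (by linarith),
    ← Complex.exp_add, ← Complex.exp_sub, qLogGamma]
  ring_nf

lemma hasDerivAt_qLogGamma (hq0 : 0 < q) (hq1 : q < 1) {z : ℂ} (hz : 0 < z.re) :
    HasDerivAt (qLogGamma q) (qDigammaSeries q z) z := by
  have hL := (hasDerivAt_qLogPoch_of_norm_lt_one hq0 hq1 (norm_cpow_lt_one hq0 hq1 hz)).comp z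
    (hasDerivAt_ofReal_cpow hq0 z)
  have hlin : HasDerivAt (fun y : ℂ => (1 - y) * Real.log (1 - q) + qLogPoch q q)
      (-Real.log (1 - q)) z := by
    simpa using (((hasDerivAt_id z).const_sub 1).mul_const
      ((Real.log (1 - q) : ℂ))).add_const (qLogPoch q q)
  refine (hlin.sub hL).congr_deriv ?_
  rw [qDigammaSeries, ← neg_mul_qLogPochDeriv]
  ring

lemma qLogGamma_ofReal_im (hq0 : 0 < q) (hq1 : q < 1) {x : ℝ} (hx : 0 < x) :
    (qLogGamma q x).im = 0 := by
  rw [qLogGamma, ← ofReal_cpow hq0.le, qLogPoch_ofReal hq0.le hq1.le hq0.le hq1,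
    qLogPoch_ofReal hq0.le hq1.le (Real.rpow_nonneg hq0.le x) (Real.rpow_lt_one hq0.le hq1 hx)]
  simp

lemma qDigamma_eq_qDigammaSeries (hq0 : 0 < q) (hq1 : q < 1) {z : ℂ} (hz : 0 < z.re)
    (hslit : exp (qLogGamma q z) ∈ slitPlane) : qDigamma q z = qDigammaSeries q z := by
  have heq : (fun w => log (qGamma q w)) =ᶠ[𝓝 z] fun w => log (exp (qLogGamma q w)) := by
    filter_upwards [(isOpen_lt continuous_const continuous_re).mem_nhds hz] with w hw
    rw [qGamma_eq_exp_qLogGamma hq0 hq1 hw]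
  rw [qDigamma, heq.deriv_eq, ((hasDerivAt_qLogGamma hq0 hq1 hz).cexp.clog hslit).deriv]
  field_simp

lemma qDigamma_eventuallyEq (hq0 : 0 < q) (hq1 : q < 1) {x : ℝ} (hx : 0 < x) :
    qDigamma q =ᶠ[𝓝 (x : ℂ)] qDigammaSeries q := by
  -- `Γ_q(x) > 0`, so near `x` the principal `log ∘ Γ_q` is a holomorphic logarithm of `Γ_q`.
  have hx' : 0 < (x : ℂ).re := by simpa using hx
  have hslit : exp (qLogGamma q x) ∈ slitPlane := by
    refine Or.inl ?_
    rw [exp_re, qLogGamma_ofReal_im hq0 hq1 hx, Real.cos_zero, mul_one]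
    exact Real.exp_pos _
  have hcont : ContinuousAt (fun z => exp (qLogGamma q z)) x :=
    (hasDerivAt_qLogGamma hq0 hq1 hx').cexp.continuousAt
  filter_upwards [(isOpen_lt continuous_const continuous_re).mem_nhds hx',
    hcont.preimage_mem_nhds (isOpen_slitPlane.mem_nhds hslit)] with z hz hzslit
  exact qDigamma_eq_qDigammaSeries hq0 hq1 hz hzslit

lemma hasDerivAt_qDigammaSeries (hq0 : 0 < q) (hq1 : q < 1) {z : ℂ} (hz : 0 < z.re) :
    HasDerivAt (qDigammaSeries q)
      (Real.log q ^ 2 * (q : ℂ) ^ z * qLambertDeriv q ((q : ℂ) ^ z)) z := by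
  have hP := (hasDerivAt_qLambert hq0 hq1 (norm_cpow_lt_one hq0 hq1 hz)).comp z
    (hasDerivAt_ofReal_cpow hq0 z)
  refine ((hP.const_mul (Real.log q : ℂ)).const_add (-(Real.log (1 - q) : ℂ))).congr_deriv ?_
  ring

lemma deriv_qDigamma_ofReal (hq0 : 0 < q) (hq1 : q < 1) {x : ℝ} (hx : 0 < x) :
    deriv (qDigamma q) x
      = Real.log q ^ 2 * (q : ℂ) ^ (x : ℂ) * qLambertDeriv q ((q : ℂ) ^ (x : ℂ)) := by
  rw [(qDigamma_eventuallyEq hq0 hq1 hx).deriv_eq]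
  exact (hasDerivAt_qDigammaSeries hq0 hq1 (by simpa using hx)).deriv

lemma kappaC_eq (hq0 : 0 < q) (hq1 : q < 1) {θ : ℝ} (hθ : 0 < θ) :
    kappaC q θ = qLambertDeriv q ((q : ℂ) ^ (θ : ℂ)) := by
  have hlog : (Real.log q : ℂ) ≠ 0 := ofReal_ne_zero.mpr (Real.log_neg hq0 hq1).ne
  have hpow : (q : ℂ) ^ (θ : ℂ) ≠ 0 := by
    rw [← ofReal_cpow hq0.le]; exact ofReal_ne_zero.mpr (Real.rpow_pos_of_pos hq0 θ).ne'
  rw [kappaC, deriv_qDigamma_ofReal hq0 hq1 hθ]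
  field_simp

lemma gC_eq (hq0 : 0 < q) (hq1 : q < 1) {θ α : ℝ} (hθ : 0 < θ) (hα0 : 0 < α) (hα1 : α < 1) :
    gC q θ α = α * qLambertDeriv q ((q : ℂ) ^ (θ : ℂ)) - qLambert q α := by
  have hlog : (Real.log q : ℂ) ≠ 0 := ofReal_ne_zero.mpr (Real.log_neg hq0 hq1).ne
  have hA : 0 < Aq q α := div_pos_of_neg_of_neg (Real.log_neg hα0 hα1) (Real.log_neg hq0 hq1)
  have hqA : (q : ℂ) ^ ((Aq q α : ℝ) : ℂ) = α := by
    rw [← ofReal_cpow hq0.le, show Aq q α = Real.logb q α from rfl,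
      Real.rpow_logb hq0 hq1.ne hα0]
  have hgκ : gC q θ α = α * kappaC q θ - qDigamma q (Aq q α) / Real.log q
      - Real.log (1 - q) / Real.log q := by
    rw [gC, kappaC]; ring
  rw [hgκ, kappaC_eq hq0 hq1 hθ, (qDigamma_eventuallyEq hq0 hq1 hA).eq_of_nhds, qDigammaSeries,
    hqA]
  field_simp
  ring

end QDigamma

section ContourTerm

lemma inv_eq_conj_div (z : ℂ) : z⁻¹ = conj z / ((‖z‖ ^ 2 : ℝ) : ℂ) := by
  rw [inv_def, normSq_eq_norm_sq, div_eq_mul_inv, ofReal_inv]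

lemma mul_one_sub_div_add_mul {e : ℂ} (he : e * conj e = 1) {α s : ℝ}
    (hw : (α : ℂ) + s * e ≠ 0) :
    e * (1 - α / ((α : ℂ) + s * e))
      = ((s / ‖(α : ℂ) + s * e‖ ^ 2 : ℝ) : ℂ) * (α * e ^ 2 + s * e) := by
  have h1 : 1 - α / ((α : ℂ) + s * e) = s * e * ((α : ℂ) + s * e)⁻¹ := by
    field_simp; ring
  rw [h1, inv_eq_conj_div]
  simp only [map_add, map_mul, conj_ofReal]
  push_cast
  linear_combination (s ^ 2 * e / (‖(α : ℂ) + s * e‖ ^ 2 : ℂ)) * he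

/-- With `a = qᵏ` and `x = κₖ`, the `k`-th term of the derivative of `-g log w + κ w + log (w; q)_∞`
for `κ = ∑ₖ κₖ` and `g = α κ - ∑ₖ α qᵏ / (1 - α qᵏ)`. -/
noncomputable def contourTerm (α a x : ℝ) (w : ℂ) : ℂ :=
  x * (1 - α / w) + α * a / (1 - α * a) / w - a / (1 - w * a)

lemma contourTerm_sub (α a x y : ℝ) (w : ℂ) :
    contourTerm α a x w - contourTerm α a y w = ((x - y : ℝ) : ℂ) * (1 - α / w) := by
  simp only [contourTerm]; push_cast; ring

lemma hasSum_contourTerm {q α : ℝ} (hq0 : 0 < q) (hq1 : q < 1) (hα0 : 0 ≤ α) (hα1 : α < 1)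
    {x : ℕ → ℝ} {X : ℂ} (hx : HasSum (fun k => (x k : ℂ)) X) {w : ℂ} (hw : 0 < w.im) :
    HasSum (fun k => contourTerm α (q ^ k) (x k) w)
      (-(α * X - qLambert q α) / w + X + qLogPochDeriv q w) := by
  have hα : ‖(α : ℂ)‖ < 1 := by rwa [Complex.norm_of_nonneg hα0]
  have hlow := one_sub_norm_le_norm_one_sub_mul_pow hq0.le hq1.le (α : ℂ)
  have hP : Summable fun k : ℕ => (α : ℂ) * q ^ k / (1 - α * q ^ k) := by
    simpa [mul_div_assoc] using
      (summable_pow_div_one_sub_mul_pow hq0.le hq1 (sub_pos.mpr hα) hlow 1).mul_left (α : ℂ)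
  have hL : HasSum (fun k : ℕ => (q : ℂ) ^ k / (1 - w * q ^ k)) (-qLogPochDeriv q w) := by
    rw [qLogPochDeriv, tsum_neg, neg_neg]
    simpa using (summable_pow_div_one_sub_mul_pow_of_im_pos hq0 hq1 hw 1).hasSum
  have hterm : (fun k => contourTerm α (q ^ k) (x k) w) = fun k : ℕ =>
      (x k * (1 - α / w) + α * q ^ k / (1 - α * q ^ k) / w) - q ^ k / (1 - w * q ^ k) := by
    funext k; simp only [contourTerm]; push_cast; ring
  rw [hterm, show -(α * X - qLambert q α) / w + X + qLogPochDeriv q w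
    = X * (1 - α / w) + qLambert q α / w - -qLogPochDeriv q w by ring]
  exact ((hx.mul_right _).add (hP.hasSum.div_const w)).sub hL

lemma contourTerm_eq (α a : ℝ) {w : ℂ} (hw : w ≠ 0) (hwa : 1 - w * a ≠ 0)
    (hαa : 1 - α * a ≠ 0) :
    contourTerm α a (a / (1 - α * a) ^ 2) w
      = -(a ^ 2 * (w - α) ^ 2) / ((1 - α * a) ^ 2 * w * (1 - w * a)) := by
  -- `field_simp` only recognises the side conditions in its own normal form `1 - a * α`.
  have hαa' : (1 : ℂ) - a * α ≠ 0 := by rw [mul_comm]; exact_mod_cast hαa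
  rw [mul_comm w] at hwa
  simp only [contourTerm]
  push_cast
  rw [mul_comm (α : ℂ) a, mul_comm w]
  field_simp
  ring

lemma neg_pow_three_mul_conj_mul_conj {e : ℂ} (he : e * conj e = 1) (α s a : ℝ) :
    -(e ^ 3 * conj ((α : ℂ) + s * e) * conj (1 - ((α : ℂ) + s * e) * a))
      = (a * s ^ 2 : ℝ) * e - ((1 - 2 * α * a) * s : ℝ) * e ^ 2
        - (α * (1 - α * a) : ℝ) * e ^ 3 := by
  simp only [map_sub, map_add, map_mul, map_one, conj_ofReal]
  push_cast
  linear_combination (a * α * s * e ^ 2 - s * (1 - a * α) * e ^ 2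
    + a * s ^ 2 * e * (e * conj e + 1)) * he

lemma mul_contourTerm_add_mul {e : ℂ} (he : e * conj e = 1) {α s a : ℝ}
    (hw : (α : ℂ) + s * e ≠ 0) (hwa : 1 - ((α : ℂ) + s * e) * a ≠ 0) (hαa : 1 - α * a ≠ 0) :
    e * contourTerm α a (a / (1 - α * a) ^ 2) ((α : ℂ) + s * e)
      = ((a ^ 2 * s ^ 2 / ((1 - α * a) ^ 2 * ‖(α : ℂ) + s * e‖ ^ 2
          * ‖1 - ((α : ℂ) + s * e) * a‖ ^ 2) : ℝ) : ℂ)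
        * ((a * s ^ 2 : ℝ) * e - ((1 - 2 * α * a) * s : ℝ) * e ^ 2
          - (α * (1 - α * a) : ℝ) * e ^ 3) := by
  rw [contourTerm_eq α a hw hwa hαa, ← neg_pow_three_mul_conj_mul_conj he,
    add_sub_cancel_left, div_eq_mul_inv, mul_inv, mul_inv,
    inv_eq_conj_div ((α : ℂ) + s * e), inv_eq_conj_div (1 - ((α : ℂ) + s * e) * a)]
  push_cast
  generalize (1 : ℂ) - α * a = P
  ring

end ContourTerm

section SteepDescent

local notation "ζ₈" => Complex.exp (Complex.I * (Real.pi / 4))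

variable {q θ α : ℝ}

lemma zeta8_eq : ζ₈ = exp (((Real.pi / 4 : ℝ) : ℂ) * I) := by
  push_cast; ring_nf

lemma re_zeta8_pow (n : ℕ) : (ζ₈ ^ n).re = Real.cos (n * (Real.pi / 4)) := by
  rw [zeta8_eq, ← Complex.exp_nat_mul, ← mul_assoc, ← ofReal_natCast, ← ofReal_mul,
    exp_ofReal_mul_I_re]

lemma zeta8_mul_conj : ζ₈ * conj ζ₈ = 1 := by
  rw [mul_conj, normSq_eq_norm_sq, zeta8_eq, norm_exp_ofReal_mul_I]
  simp

lemma im_contour_pos {s : ℝ} (hs : 0 < s) : 0 < ((α : ℂ) + s * ζ₈).im := by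
  have : 0 < Real.sin (Real.pi / 4) :=
    Real.sin_pos_of_pos_of_lt_pi (by positivity) (by linarith [Real.pi_pos])
  rw [zeta8_eq]
  simp only [add_im, ofReal_im, mul_im, ofReal_re, exp_ofReal_mul_I_im, zero_mul, add_zero,
    zero_add]
  positivity

lemma contour_ne_zero {s : ℝ} (hs : 0 < s) : (α : ℂ) + s * ζ₈ ≠ 0 := fun h => by
  simpa [h] using (im_contour_pos (α := α) hs).ne'

lemma cpow_WcA (hq0 : 0 < q) (hq1 : q < 1) {s : ℝ} (hs : 0 < s) :
    (q : ℂ) ^ WcA q α s = α + s * ζ₈ := by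
  have hlog : (Real.log q : ℂ) ≠ 0 := ofReal_ne_zero.mpr (Real.log_neg hq0 hq1).ne
  rw [cpow_def_of_ne_zero (ofReal_ne_zero.mpr hq0.ne'), WcA, ← ofReal_log hq0.le,
    mul_div_cancel₀ _ hlog, exp_log (contour_ne_zero hs)]

lemma re_g0_WcA (hq0 : 0 < q) (hq1 : q < 1) {s : ℝ} (hs : 0 < s) :
    (g0 q θ α (WcA q α s)).re
      = (-gC q θ α * log (α + s * ζ₈) + kappaC q θ * (α + s * ζ₈)
          + qLogPoch q (α + s * ζ₈)).re := by
  have hlog : (Real.log q : ℂ) ≠ 0 := ofReal_ne_zero.mpr (Real.log_neg hq0 hq1).ne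
  have hmul : -gC q θ α * Real.log q * WcA q α s = -gC q θ α * log (α + s * ζ₈) := by
    rw [WcA]; field_simp
  have hne k : 1 - ((α : ℂ) + s * ζ₈) * q ^ k ≠ 0 :=
    slitPlane_ne_zero (one_sub_mul_pow_mem_slitPlane_of_im_pos hq0 (im_contour_pos hs) k)
  rw [g0, hmul, cpow_WcA hq0 hq1 hs, add_re, re_log_qPoch hq0.le hq1 hne, ← add_re]

lemma hasDerivAt_re_g0_WcA (hq0 : 0 < q) (hq1 : q < 1) {s : ℝ} (hs : 0 < s) :
    HasDerivAt (fun u : ℝ => (g0 q θ α (WcA q α u)).re)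
      (ζ₈ * (-gC q θ α / (α + s * ζ₈) + kappaC q θ + qLogPochDeriv q (α + s * ζ₈))).re s := by
  have hw := im_contour_pos (α := α) hs
  have hF : HasDerivAt (fun z : ℂ => -gC q θ α * log z + kappaC q θ * z + qLogPoch q z)
      (-gC q θ α * (α + s * ζ₈)⁻¹ + kappaC q θ * 1 + qLogPochDeriv q (α + s * ζ₈))
      (α + s * ζ₈) :=
    (((hasDerivAt_log (Or.inr hw.ne')).const_mul _).add ((hasDerivAt_id _).const_mul _)).add
      (hasDerivAt_qLogPoch_of_im_pos hq0 hq1 hw)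
  have hline : HasDerivAt (fun u : ℝ => (α : ℂ) + u * ζ₈) ζ₈ s := by
    simpa using ((hasDerivAt_id s).ofReal_comp.mul_const ζ₈).const_add (α : ℂ)
  refine ((reCLM.hasFDerivAt.comp_hasDerivAt s (hF.comp s hline)).congr_of_eventuallyEq ?_
    ).congr_deriv ?_
  · filter_upwards [Ioi_mem_nhds hs] with u hu
    exact re_g0_WcA hq0 hq1 hu
  · simp only [reCLM_apply]
    ring_nf

lemma hasSum_re_zeta8_mul_contourTerm (hq0 : 0 < q) (hq1 : q < 1) (hα0 : 0 ≤ α) (hα1 : α < 1)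
    {t : ℝ} (ht0 : 0 ≤ t) (ht1 : t < 1) {s : ℝ} (hs : 0 < s) :
    HasSum (fun k => (ζ₈ * contourTerm α (q ^ k) (q ^ k / (1 - t * q ^ k) ^ 2) (α + s * ζ₈)).re)
      (ζ₈ * (-(α * qLambertDeriv q t - qLambert q α) / (α + s * ζ₈) + qLambertDeriv q t
        + qLogPochDeriv q (α + s * ζ₈))).re :=
  hasSum_re ((hasSum_contourTerm hq0 hq1 hα0 hα1 (hasSum_qLambertDeriv_ofReal hq0 hq1 ht0 ht1)
    (im_contour_pos hs)).mul_left ζ₈)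

noncomputable def steepDescentTerm (q α s : ℝ) (k : ℕ) : ℝ :=
  q ^ (2 * k) * s ^ 2 *
    (q ^ (k : ℕ) * s ^ 2 * Real.cos (Real.pi / 4)
      - (1 - 2 * α * q ^ (k : ℕ)) * s * Real.cos (Real.pi / 2)
      - α * (1 - α * q ^ (k : ℕ)) * Real.cos (3 * Real.pi / 4)) /
    ((1 - α * q ^ (k : ℕ)) ^ 2 *
      ‖(α : ℂ) + (s : ℂ) * Complex.exp (Complex.I * (Real.pi / 4))‖ ^ 2 *
      ‖1 - ((α : ℂ) + (s : ℂ) * Complex.exp (Complex.I * (Real.pi / 4)))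
        * (q : ℂ) ^ (k : ℕ)‖ ^ 2)

lemma steepDescentTerm_eq (hq0 : 0 < q) (hq1 : q < 1) (hα0 : 0 ≤ α) (hα1 : α < 1) {s : ℝ}
    (hs : 0 < s) (k : ℕ) :
    steepDescentTerm q α s k
      = (ζ₈ * contourTerm α (q ^ k) (q ^ k / (1 - α * q ^ k) ^ 2) (α + s * ζ₈)).re := by
  have hwa : 1 - ((α : ℂ) + s * ζ₈) * (q ^ k : ℝ) ≠ 0 := by
    rw [ofReal_pow]
    exact slitPlane_ne_zero (one_sub_mul_pow_mem_slitPlane_of_im_pos hq0 (im_contour_pos hs) k)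
  rw [mul_contourTerm_add_mul zeta8_mul_conj (contour_ne_zero hs) hwa
    (one_sub_mul_pow_pos hq0.le hq1.le hα0 hα1 k).ne', re_ofReal_mul]
  simp only [sub_re, re_ofReal_mul]
  have h1 : (ζ₈).re = Real.cos (Real.pi / 4) := by simpa using re_zeta8_pow 1
  have h2 : (ζ₈ ^ 2).re = Real.cos (Real.pi / 2) := by rw [re_zeta8_pow]; congr 1; push_cast; ring
  have h3 : (ζ₈ ^ 3).re = Real.cos (3 * Real.pi / 4) := by
    rw [re_zeta8_pow]; congr 1; push_cast; ring
  rw [h1, h2, h3, steepDescentTerm, pow_mul, ofReal_pow]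
  ring

lemma steepDescentTerm_pos (hq0 : 0 < q) (hq1 : q < 1) (hα0 : 0 < α) (hα1 : α < 1) {s : ℝ}
    (hs : 0 < s) (k : ℕ) : 0 < steepDescentTerm q α s k := by
  have hc : 0 < Real.cos (Real.pi / 4) := by rw [Real.cos_pi_div_four]; positivity
  have hc3 : Real.cos (3 * Real.pi / 4) = -Real.cos (Real.pi / 4) := by
    rw [← Real.cos_pi_sub]; congr 1; ring
  have hαq := one_sub_mul_pow_pos hq0.le hq1.le hα0.le hα1 k
  have hw : 0 < ‖(α : ℂ) + s * ζ₈‖ := norm_pos_iff.mpr (contour_ne_zero hs)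
  have hwq : 0 < ‖1 - ((α : ℂ) + s * ζ₈) * (q : ℂ) ^ k‖ := norm_pos_iff.mpr
    (slitPlane_ne_zero (one_sub_mul_pow_mem_slitPlane_of_im_pos hq0 (im_contour_pos hs) k))
  rw [steepDescentTerm, Real.cos_pi_div_two, hc3]
  have := pow_pos hq0 k
  apply div_pos _ (by positivity)
  apply mul_pos (by positivity)
  nlinarith [mul_pos (mul_pos hα0 hαq) hc, mul_pos (mul_pos this (pow_pos hs 2)) hc]

lemma re_zeta8_mul_one_sub_div_pos {s : ℝ} (hs : 0 < s) :
    0 < (ζ₈ * (1 - α / ((α : ℂ) + s * ζ₈))).re := by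
  have hc : 0 < Real.cos (Real.pi / 4) := by rw [Real.cos_pi_div_four]; positivity
  have hw : 0 < ‖(α : ℂ) + s * ζ₈‖ := norm_pos_iff.mpr (contour_ne_zero hs)
  rw [mul_one_sub_div_add_mul zeta8_mul_conj (contour_ne_zero hs), re_ofReal_mul, add_re,
    re_ofReal_mul, re_ofReal_mul, re_zeta8_pow]
  have h1 : (ζ₈).re = Real.cos (Real.pi / 4) := by simpa using re_zeta8_pow 1
  rw [h1, show ((2 : ℕ) : ℝ) * (Real.pi / 4) = Real.pi / 2 by push_cast; ring, Real.cos_pi_div_two]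
  simp only [mul_zero, zero_add]
  positivity

lemma steepDescentTerm_lt (hq0 : 0 < q) (hq1 : q < 1) (hθ : 0 < θ) (hα0 : 0 < α)
    (hα : α < q ^ θ) {s : ℝ} (hs : 0 < s) (k : ℕ) :
    steepDescentTerm q α s k
      < (ζ₈ * contourTerm α (q ^ k) (q ^ k / (1 - q ^ θ * q ^ k) ^ 2) (α + s * ζ₈)).re := by
  have hqθ : q ^ θ < 1 := Real.rpow_lt_one hq0.le hq1 hθ
  have hθk := one_sub_mul_pow_pos hq0.le hq1.le (Real.rpow_nonneg hq0.le θ) hqθ k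
  have hgap : 0 < q ^ k / (1 - q ^ θ * q ^ k) ^ 2 - q ^ k / (1 - α * q ^ k) ^ 2 := by
    refine sub_pos.mpr (div_lt_div_of_pos_left (pow_pos hq0 k) (by positivity) ?_)
    exact pow_lt_pow_left₀ (by nlinarith [pow_pos hq0 k]) hθk.le two_ne_zero
  rw [steepDescentTerm_eq hq0 hq1 hα0.le (hα.trans hqθ) hs, ← sub_pos, ← sub_re, ← mul_sub,
    contourTerm_sub, mul_left_comm, re_ofReal_mul]
  exact mul_pos hgap (re_zeta8_mul_one_sub_div_pos hs)

lemma summable_steepDescentTerm (hq0 : 0 < q) (hq1 : q < 1) (hα0 : 0 ≤ α) (hα1 : α < 1)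
    {s : ℝ} (hs : 0 < s) : Summable (steepDescentTerm q α s) :=
  (hasSum_re_zeta8_mul_contourTerm hq0 hq1 hα0 hα1 hα0 hα1 hs).summable.congr
    fun k => (steepDescentTerm_eq hq0 hq1 hα0 hα1 hs k).symm

lemma tsum_steepDescentTerm_pos (hq0 : 0 < q) (hq1 : q < 1) (hα0 : 0 < α) (hα1 : α < 1)
    {s : ℝ} (hs : 0 < s) : 0 < ∑' k, steepDescentTerm q α s k :=
  (summable_steepDescentTerm hq0 hq1 hα0.le hα1 hs).tsum_pos
    (fun k => (steepDescentTerm_pos hq0 hq1 hα0 hα1 hs k).le) 0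
    (steepDescentTerm_pos hq0 hq1 hα0 hα1 hs 0)

lemma tsum_steepDescentTerm_lt_deriv (hq0 : 0 < q) (hq1 : q < 1) (hθ : 0 < θ) (hα0 : 0 < α)
    (hα : α < q ^ θ) {s : ℝ} (hs : 0 < s) :
    ∑' k, steepDescentTerm q α s k < deriv (fun u : ℝ => (g0 q θ α (WcA q α u)).re) s := by
  have hqθ : q ^ θ < 1 := Real.rpow_lt_one hq0.le hq1 hθ
  have hα1 := hα.trans hqθ
  have hV := hasSum_re_zeta8_mul_contourTerm hq0 hq1 hα0.le hα1 (Real.rpow_nonneg hq0.le θ) hqθ hs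
  rw [(hasDerivAt_re_g0_WcA hq0 hq1 hs).deriv, gC_eq hq0 hq1 hθ hα0 hα1, kappaC_eq hq0 hq1 hθ,
    ← ofReal_cpow hq0.le, ← hV.tsum_eq]
  exact (summable_steepDescentTerm hq0 hq1 hα0.le hα1 hs).tsum_lt_tsum
    (fun k => (steepDescentTerm_lt hq0 hq1 hθ hα0 hα hs k).le)
    (steepDescentTerm_lt hq0 hq1 hθ hα0 hα hs 0) hV.summable

end SteepDescent

theorem g0_steep_descent (q θ α : ℝ) (hq0 : 0 < q) (hq1 : q < 1) (hθ : 0 < θ)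
    (hα0 : 0 < α) (hα : α < q ^ θ) :
    (∀ s : ℝ, 0 < s →
      (∑' k : ℕ, q ^ (2 * k) * s ^ 2 *
          (q ^ (k : ℕ) * s ^ 2 * Real.cos (Real.pi / 4)
            - (1 - 2 * α * q ^ (k : ℕ)) * s * Real.cos (Real.pi / 2)
            - α * (1 - α * q ^ (k : ℕ)) * Real.cos (3 * Real.pi / 4)) /
          ((1 - α * q ^ (k : ℕ)) ^ 2 *
            ‖(α : ℂ) + (s : ℂ) * Complex.exp (Complex.I * (Real.pi / 4))‖ ^ 2 *
            ‖1 - ((α : ℂ) + (s : ℂ) * Complex.exp (Complex.I * (Real.pi / 4)))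
              * (q : ℂ) ^ (k : ℕ)‖ ^ 2))
        < deriv (fun u : ℝ => (g0 q θ α (WcA q α u)).re) s ∧
      0 < ∑' k : ℕ, q ^ (2 * k) * s ^ 2 *
          (q ^ (k : ℕ) * s ^ 2 * Real.cos (Real.pi / 4)
            - (1 - 2 * α * q ^ (k : ℕ)) * s * Real.cos (Real.pi / 2)
            - α * (1 - α * q ^ (k : ℕ)) * Real.cos (3 * Real.pi / 4)) /
          ((1 - α * q ^ (k : ℕ)) ^ 2 *
            ‖(α : ℂ) + (s : ℂ) * Complex.exp (Complex.I * (Real.pi / 4))‖ ^ 2 *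
            ‖1 - ((α : ℂ) + (s : ℂ) * Complex.exp (Complex.I * (Real.pi / 4)))
              * (q : ℂ) ^ (k : ℕ)‖ ^ 2))
    ∧ StrictMonoOn (fun s : ℝ => (g0 q θ α (WcA q α s)).re) (Set.Ioi 0) := by
  have hα1 : α < 1 := hα.trans (Real.rpow_lt_one hq0.le hq1 hθ)
  have hlt := fun s (hs : 0 < s) => tsum_steepDescentTerm_lt_deriv hq0 hq1 hθ hα0 hα hs
  have hpos := fun s (hs : 0 < s) => tsum_steepDescentTerm_pos hq0 hq1 hα0 hα1 hs
  refine ⟨fun s hs => ⟨hlt s hs, hpos s hs⟩, strictMonoOn_of_deriv_pos (convex_Ioi 0)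
    (fun s hs => (hasDerivAt_re_g0_WcA hq0 hq1 hs).continuousAt.continuousWithinAt) ?_⟩
  rw [interior_Ioi]
  exact fun s hs => (hpos s hs).trans (hlt s hs)
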